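/- arXiv:2307.14656 — 3 statements merged into one kernel-verified Lean document; each statement's English description precedes it below -/
import Mathlib

section
/- For any real numbers R ≤ S and any y ∈ [0,1], the integral over x ∈ [0,1] of the Lebesgue measure of the set A_{R,S,y}(x) = {u ∈ [R,S] : frac(x + frac(u)) ≥ y} equals (S − R)(1 − y), where frac denotes the fractional part. -/
open MeasureTheory Set

lemma key_lemma (y c : ℝ) (hy0 : 0 ≤ y) (hy1 : y ≤ 1) (hc0 : 0 ≤ c) (hc1 : c < 1) :
    volume {x : ℝ | x ∈ Ioc (0:ℝ) 1 ∧ y ≤ Int.fract (x + c)} = ENNReal.ofReal (1 - y) := by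
  set S' : Set ℝ := {x : ℝ | x ∈ Ioo (0:ℝ) 1 ∧ y ≤ Int.fract (x + c)} with hS'def
  have hfract_hi : ∀ x : ℝ, 0 < x → x < 1 → 1 ≤ x + c → Int.fract (x + c) = x + c - 1 := by
    intro x hx0 hx1 hge
    calc Int.fract (x + c) = Int.fract ((x + c - 1) + 1) := by congr 1; ring
      _ = Int.fract (x + c - 1) := Int.fract_add_one _
      _ = x + c - 1 := Int.fract_eq_self.2 ⟨by linarith, by linarith⟩
  have hvolS' : volume S' = ENNReal.ofReal (1 - y) := by
    rcases le_or_gt y c with h | h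
    · have hS' : S' = Ioo 0 (1 - c) ∪ Ico (1 + y - c) 1 := by
        ext x
        simp only [hS'def, mem_setOf_eq, mem_Ioo, mem_union, mem_Ico]
        constructor
        · rintro ⟨⟨hx0, hx1⟩, hyx⟩
          rcases lt_or_ge (x + c) 1 with hlt | hge
          · exact Or.inl ⟨hx0, by linarith⟩
          · rw [hfract_hi x hx0 hx1 hge] at hyx
            exact Or.inr ⟨by linarith, hx1⟩
        · rintro (⟨hx0, hx1⟩ | ⟨hx0, hx1⟩)
          · refine ⟨⟨hx0, by linarith⟩, ?_⟩
            rw [Int.fract_eq_self.2 ⟨by linarith, by linarith⟩]; linarith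
          · refine ⟨⟨by linarith, hx1⟩, ?_⟩
            rw [hfract_hi x (by linarith) hx1 (by linarith)]; linarith
      have hdisj : Disjoint (Ioo (0:ℝ) (1 - c)) (Ico (1 + y - c) 1) := by
        refine Set.disjoint_left.2 fun a ha hb => ?_
        have := ha.2; have := hb.1; linarith
      rw [hS', measure_union hdisj measurableSet_Ico, Real.volume_Ioo, Real.volume_Ico,
        ← ENNReal.ofReal_add (by linarith) (by linarith)]
      congr 1; ring
    · have hS' : S' = Ico (y - c) (1 - c) := by
        ext x
        simp only [hS'def, mem_setOf_eq, mem_Ioo, mem_Ico]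
        constructor
        · rintro ⟨⟨hx0, hx1⟩, hyx⟩
          rcases lt_or_ge (x + c) 1 with hlt | hge
          · rw [Int.fract_eq_self.2 ⟨by linarith, hlt⟩] at hyx
            exact ⟨by linarith, by linarith⟩
          · rw [hfract_hi x hx0 hx1 hge] at hyx
            linarith
        · rintro ⟨hx0, hx1⟩
          refine ⟨⟨by linarith, by linarith⟩, ?_⟩
          rw [Int.fract_eq_self.2 ⟨by linarith, by linarith⟩]; linarith
      rw [hS', Real.volume_Ico]
      congr 1; ring
  have hsub1 : S' ⊆ {x : ℝ | x ∈ Ioc (0:ℝ) 1 ∧ y ≤ Int.fract (x + c)} := by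
    rintro x ⟨⟨hx0, hx1⟩, hyx⟩
    exact ⟨⟨hx0, le_of_lt hx1⟩, hyx⟩
  have hsub2 : {x : ℝ | x ∈ Ioc (0:ℝ) 1 ∧ y ≤ Int.fract (x + c)} ⊆ S' ∪ {1} := by
    rintro x ⟨⟨hx0, hx1⟩, hyx⟩
    rcases lt_or_eq_of_le hx1 with hlt | heq
    · exact Or.inl ⟨⟨hx0, hlt⟩, hyx⟩
    · exact Or.inr (by simp [heq])
  refine le_antisymm ?_ ?_
  · calc volume {x : ℝ | x ∈ Ioc (0:ℝ) 1 ∧ y ≤ Int.fract (x + c)}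
        ≤ volume (S' ∪ {1}) := measure_mono hsub2
      _ ≤ volume S' + volume ({1} : Set ℝ) := measure_union_le _ _
      _ = ENNReal.ofReal (1 - y) := by rw [Real.volume_singleton, add_zero, hvolS']
  · rw [← hvolS']; exact measure_mono hsub1

theorem stmt_0 (R S y : ℝ) (hRS : R ≤ S) (hy : y ∈ Icc (0:ℝ) 1) :
    ∫ x in (0:ℝ)..1,
      (volume {u : ℝ | u ∈ Icc R S ∧ Int.fract (x + Int.fract u) ≥ y}).toReal
      = (S - R) * (1 - y) := by
  obtain ⟨hy0, hy1⟩ := hy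
  set s : Set (ℝ × ℝ) :=
    {p : ℝ × ℝ | p.2 ∈ Icc R S ∧ y ≤ Int.fract (p.1 + Int.fract p.2)} with hsdef
  have hmf : Measurable fun p : ℝ × ℝ => Int.fract (p.1 + Int.fract p.2) :=
    Measurable.fract (measurable_fst.add measurable_snd.fract)
  have hs : MeasurableSet s :=
    (measurable_snd measurableSet_Icc).inter (hmf measurableSet_Ici)
  have hAx : ∀ x : ℝ,
      {u : ℝ | u ∈ Icc R S ∧ Int.fract (x + Int.fract u) ≥ y} = Prod.mk x ⁻¹' s :=
    fun x => rfl
  have hmeas : Measurable fun x => volume (Prod.mk x ⁻¹' s) :=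
    measurable_measure_prodMk_left hs
  have hfin : ∀ x : ℝ, volume (Prod.mk x ⁻¹' s) ≤ ENNReal.ofReal (S - R) := by
    intro x
    refine le_trans (measure_mono fun u hu => hu.1) ?_
    rw [Real.volume_Icc]
  rw [intervalIntegral.integral_of_le zero_le_one]
  simp_rw [hAx]
  rw [integral_toReal hmeas.aemeasurable
    (ae_of_all _ fun x => lt_of_le_of_lt (hfin x) ENNReal.ofReal_lt_top)]
  have key2 : ∫⁻ x in Ioc (0:ℝ) 1, volume (Prod.mk x ⁻¹' s)
      = ENNReal.ofReal (1 - y) * ENNReal.ofReal (S - R) := by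
    have hprod := Measure.prod_apply (μ := volume.restrict (Ioc (0:ℝ) 1)) (ν := volume) hs
    rw [← hprod, Measure.prod_apply_symm hs]
    have hsec : ∀ u : ℝ, (volume.restrict (Ioc (0:ℝ) 1)) ((fun x => (x, u)) ⁻¹' s)
        = (Icc R S).indicator (fun _ => ENNReal.ofReal (1 - y)) u := by
      intro u
      by_cases hu : u ∈ Icc R S
      · rw [indicator_of_mem hu]
        have hpre : (fun x => (x, u)) ⁻¹' s = {x : ℝ | y ≤ Int.fract (x + Int.fract u)} := by
          ext x
          simp only [hsdef, mem_preimage, mem_setOf_eq]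
          exact and_iff_right hu
        have hmpre : MeasurableSet {x : ℝ | y ≤ Int.fract (x + Int.fract u)} :=
          (Measurable.fract (measurable_id.add_const _)) measurableSet_Ici
        rw [hpre, Measure.restrict_apply hmpre]
        have : {x : ℝ | y ≤ Int.fract (x + Int.fract u)} ∩ Ioc 0 1
            = {x : ℝ | x ∈ Ioc (0:ℝ) 1 ∧ y ≤ Int.fract (x + Int.fract u)} := by
          ext x; simp [and_comm]
        rw [this, key_lemma y (Int.fract u) hy0 hy1 (Int.fract_nonneg u) (Int.fract_lt_one u)]
      · rw [indicator_of_notMem hu]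
        have hemp : ((fun x => (x, u)) ⁻¹' s) = ∅ := by
          ext x
          simp only [hsdef, mem_preimage, mem_setOf_eq, mem_empty_iff_false, iff_false]
          exact fun h => hu h.1
        rw [hemp, measure_empty]
    rw [lintegral_congr hsec, lintegral_indicator measurableSet_Icc _,
      setLIntegral_const, Real.volume_Icc]
  rw [key2, ENNReal.toReal_mul, ENNReal.toReal_ofReal (by linarith),
    ENNReal.toReal_ofReal (by linarith)]
  ring
end

section
/- Let I = [b, c] ⊆ [0,1] and let s ∈ [0,1). Then ∫₀¹ μ(I ∩ [0, frac(s + x)]) dx = (c − b) − (c² − b²)/2, where frac denotes the fractional part and μ is Lebesgue measure. -/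
/-!
Since `μ([b, c] ∩ [0, y]) = max (min c y - b) 0` and `x ↦ frac (s + x)` is a measure-preserving
rearrangement of `[0, 1)`, the integral equals `∫₀¹ max (min c y - b) 0 dy`, which is `0` on
`[0, b]`, `y - b` on `[b, c]` and `c - b` on `[c, 1]`.
-/

open MeasureTheory Set

lemma toReal_volume_Icc_inter_Icc_zero {b : ℝ} (hb : 0 ≤ b) (c y : ℝ) :
    (volume (Icc b c ∩ Icc 0 y)).toReal = max (min c y - b) 0 := by
  rw [Icc_inter_Icc, Real.volume_Icc, max_eq_left hb, ENNReal.toReal_ofReal']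

section IntervalIntegral

variable {E : Type*} [NormedAddCommGroup E] [NormedSpace ℝ E]

lemma intervalIntegral_comp_fract (f : ℝ → E) :
    ∫ x in (0:ℝ)..1, f (Int.fract x) = ∫ x in (0:ℝ)..1, f x := by
  simp only [intervalIntegral.integral_of_le zero_le_one, ← integral_Ico_eq_integral_Ioc]
  exact setIntegral_congr_fun measurableSet_Ico fun x hx ↦ by rw [Int.fract_eq_self.2 hx]

lemma intervalIntegral_comp_fract_add (f : ℝ → E) (s : ℝ) :
    ∫ x in (0:ℝ)..1, f (Int.fract (s + x)) = ∫ x in (0:ℝ)..1, f x := by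
  have hper : Function.Periodic (fun y ↦ f (Int.fract y)) 1 := (Int.fract_periodic ℝ).comp f
  rw [intervalIntegral.integral_comp_add_left (fun y ↦ f (Int.fract y)), add_zero,
    hper.intervalIntegral_add_eq s 0, zero_add, intervalIntegral_comp_fract]

end IntervalIntegral

lemma integral_max_min_sub {b c : ℝ} (hb : 0 ≤ b) (hbc : b ≤ c) (hc : c ≤ 1) :
    ∫ y in (0:ℝ)..1, max (min c y - b) 0 = (c - b) - (c ^ 2 - b ^ 2) / 2 := by
  have hcont : Continuous fun y : ℝ ↦ max (min c y - b) 0 := by fun_prop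
  rw [← intervalIntegral.integral_add_adjacent_intervals (b := c)
      (hcont.intervalIntegrable _ _) (hcont.intervalIntegrable _ _),
    ← intervalIntegral.integral_add_adjacent_intervals (b := b)
      (hcont.intervalIntegrable _ _) (hcont.intervalIntegrable _ _)]
  have below : EqOn (fun y ↦ max (min c y - b) 0) (fun _ ↦ 0) (uIcc 0 b) := by
    intro y hy
    rw [uIcc_of_le hb] at hy
    exact max_eq_right (by linarith [min_le_right c y, hy.2])
  have between : EqOn (fun y ↦ max (min c y - b) 0) (fun y ↦ y - b) (uIcc b c) := by
    intro y hy
    rw [uIcc_of_le hbc] at hy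
    simp only [min_eq_right hy.2, max_eq_left (sub_nonneg.2 hy.1)]
  have above : EqOn (fun y ↦ max (min c y - b) 0) (fun _ ↦ c - b) (uIcc c 1) := by
    intro y hy
    rw [uIcc_of_le hc] at hy
    simp only [min_eq_left hy.1, max_eq_left (sub_nonneg.2 hbc)]
  rw [intervalIntegral.integral_congr below, intervalIntegral.integral_congr between,
    intervalIntegral.integral_congr above, intervalIntegral.integral_sub
      intervalIntegral.intervalIntegrable_id intervalIntegrable_const]
  simp only [intervalIntegral.integral_const, integral_id, smul_eq_mul]
  ring

theorem stmt_14_general (b c s : ℝ) (hb : 0 ≤ b) (hbc : b ≤ c) (hc : c ≤ 1) :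
    ∫ x in (0:ℝ)..1,
        (volume (Icc b c ∩ Icc 0 (Int.fract (s + x)))).toReal
      = (c - b) - (c ^ 2 - b ^ 2) / 2 := by
  simp only [toReal_volume_Icc_inter_Icc_zero hb]
  rw [intervalIntegral_comp_fract_add (fun y ↦ max (min c y - b) 0) s]
  exact integral_max_min_sub hb hbc hc

theorem stmt_14 (b c s : ℝ) (hb : 0 ≤ b) (hbc : b ≤ c) (hc : c ≤ 1)
    (hs : s ∈ Ico (0:ℝ) 1) :
    ∫ x in (0:ℝ)..1,
        (volume (Icc b c ∩ Icc 0 (Int.fract (s + x)))).toReal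
      = (c - b) - (c ^ 2 - b ^ 2) / 2 :=
  stmt_14_general b c s hb hbc hc
end

section
/- Let I = [b, c] ⊆ [0,1] and let r ∈ [0,1). Then ∫₀¹ μ(I ∩ [frac(r + x), 1]) dx = (c² − b²)/2, where frac denotes the fractional part and μ is Lebesgue measure. -/
open MeasureTheory Set

theorem stmt_15 (b c r : ℝ) (hb : 0 ≤ b) (hbc : b ≤ c) (hc : c ≤ 1)
    (hr : r ∈ Ico (0:ℝ) 1) :
    ∫ x in (0:ℝ)..1,
        (volume (Icc b c ∩ Icc (Int.fract (r + x)) 1)).toReal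
      = (c ^ 2 - b ^ 2) / 2 := by
  set g : ℝ → ℝ := fun y => max (c - max b y) 0 with hg
  have hgc : Continuous g := by fun_prop
  have key : ∀ x : ℝ, (volume (Icc b c ∩ Icc (Int.fract (r + x)) 1)).toReal
      = g (Int.fract (r + x)) := by
    intro x
    rw [Icc_inter_Icc, Real.volume_Icc]
    have : c ⊓ 1 = c := min_eq_left hc
    rw [this, ENNReal.toReal_ofReal']
  have hper : Function.Periodic (fun x => g (Int.fract x)) 1 := by
    intro x; simp [Int.fract_add_one]
  simp_rw [key]
  have h1 : ∫ x in (0:ℝ)..1, g (Int.fract (r + x))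
      = ∫ x in r..(r+1), g (Int.fract x) := by
    rw [intervalIntegral.integral_comp_add_left (fun x => g (Int.fract x)) r]
    norm_num
  have h2 : ∫ x in r..(r+1), g (Int.fract x) = ∫ x in (0:ℝ)..(0+1), g (Int.fract x) :=
    hper.intervalIntegral_add_eq r 0
  have h3 : ∫ x in (0:ℝ)..1, g (Int.fract x) = ∫ x in (0:ℝ)..1, g x := by
    apply intervalIntegral.integral_congr_ae
    have : ({(1:ℝ)} : Set ℝ)ᶜ ∈ ae volume := compl_mem_ae_iff.2 (by simp)
    filter_upwards [this] with x hx hx'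
    rw [Set.uIoc_of_le (by norm_num : (0:ℝ) ≤ 1)] at hx'
    rw [Int.fract_eq_self.2 ⟨le_of_lt hx'.1, lt_of_le_of_ne hx'.2 (by simpa using hx)⟩]
  have i1 : IntervalIntegrable g volume 0 b := hgc.intervalIntegrable _ _
  have i2 : IntervalIntegrable g volume b c := hgc.intervalIntegrable _ _
  have i3 : IntervalIntegrable g volume c 1 := hgc.intervalIntegrable _ _
  have hsplit : ∫ x in (0:ℝ)..1, g x
      = (∫ x in (0:ℝ)..b, g x) + (∫ x in b..c, g x) + (∫ x in c..(1:ℝ), g x) := by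
    rw [← intervalIntegral.integral_add_adjacent_intervals (i1.trans i2) i3,
        ← intervalIntegral.integral_add_adjacent_intervals i1 i2]
  have e1 : ∫ x in (0:ℝ)..b, g x = b * (c - b) := by
    rw [intervalIntegral.integral_congr (g := fun _ => c - b)]
    · simp; ring
    · intro x hx
      rw [Set.uIcc_of_le hb] at hx
      simp only [g]
      rw [max_eq_left hx.2, max_eq_left (by linarith)]
  have e2 : ∫ x in b..c, g x = (c - b)^2 / 2 := by
    rw [intervalIntegral.integral_congr (g := fun x => c - x)]
    · rw [intervalIntegral.integral_sub (continuous_const.intervalIntegrable _ _)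
        (continuous_id'.intervalIntegrable _ _)]
      simp
      ring
    · intro x hx
      rw [Set.uIcc_of_le hbc] at hx
      simp only [g]
      rw [max_eq_right hx.1, max_eq_left (by linarith [hx.2])]
  have e3 : ∫ x in c..(1:ℝ), g x = 0 := by
    rw [intervalIntegral.integral_congr (g := fun _ => (0:ℝ))]
    · simp
    · intro x hx
      rw [Set.uIcc_of_le hc] at hx
      simp only [g]
      rw [max_eq_right (le_trans hbc hx.1), max_eq_right (by linarith [hx.1])]
  rw [h1, h2, zero_add, h3, hsplit, e1, e2, e3]
  ring
end
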